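/- Let T be (n,k)-quasi-*-paranormal and λ a nonzero complex number. If Tx = λx, then T*x = conj(λ)x. Consequently ker(T − λ) ⊆ ker(T* − conj(λ)). -/

import Mathlib

/-!
On an eigenvector `T x = λ x` every norm in the paranormality inequality is a power of `|λ|`
times `‖x‖` or `‖T* x‖`; cancelling the positive factor `|λ| ^ (k (n + 1))` leaves
`‖T* x‖ ≤ |λ| ‖x‖`. Since `⟪T* x, conj λ x⟫ = |λ|² ‖x‖²`, expanding `‖T* x - conj λ x‖²` shows
it is `‖T* x‖² - |λ|² ‖x‖² ≤ 0`.
-/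

open ContinuousLinearMap
open scoped InnerProductSpace

theorem ContinuousLinearMap.pow_apply_of_apply_eq_smul {R M : Type*} [CommSemiring R]
    [TopologicalSpace M] [AddCommMonoid M] [Module R M] {T : M →L[R] M} {c : R} {x : M}
    (hx : T x = c • x) (m : ℕ) : (T ^ m) x = c ^ m • x := by
  induction m with
  | zero => simp
  | succ m ih => rw [pow_succ', mul_apply_eq_comp, ih, map_smul, hx, smul_smul, pow_succ]

section

variable {H : Type*} [NormedAddCommGroup H] [InnerProductSpace ℂ H]

def IsQuasiStarParanormal [CompleteSpace H] (n k : ℕ) (T : H →L[ℂ] H) : Prop :=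
  ∀ x : H, ‖adjoint T (T ^ k <| x)‖ ^ (n + 1) ≤ ‖T ^ (n + 1) <| T ^ k <| x‖ * ‖T ^ k <| x‖ ^ n

theorem ContinuousLinearMap.adjoint_apply_eq_conj_smul_of_norm_le [CompleteSpace H]
    {T : H →L[ℂ] H} {c : ℂ} {x : H} (hx : T x = c • x) (hle : ‖adjoint T x‖ ≤ ‖c‖ * ‖x‖) :
    adjoint T x = starRingEnd ℂ c • x := by
  have hinner : ⟪adjoint T x, starRingEnd ℂ c • x⟫_ℂ = ((‖c‖ * ‖x‖) ^ 2 : ℝ) := by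
    rw [adjoint_inner_left, map_smul, hx, smul_smul, inner_smul_right,
      inner_self_eq_norm_sq_to_K, ← Complex.normSq_eq_conj_mul_self, Complex.normSq_eq_norm_sq]
    simp only [Complex.ofReal_pow, Complex.ofReal_mul, mul_pow]
    rfl
  have hsq : ‖adjoint T x - starRingEnd ℂ c • x‖ ^ 2 ≤ 0 := by
    rw [@norm_sub_sq ℂ, hinner, norm_smul, RCLike.norm_conj]
    simp only [RCLike.re_to_complex, Complex.ofReal_re]
    nlinarith [norm_nonneg (adjoint T x)]
  rw [← sub_eq_zero, ← norm_le_zero_iff]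
  exact sq_nonpos_iff _ |>.mp hsq |>.le

theorem IsQuasiStarParanormal.norm_adjoint_apply_le [CompleteSpace H] {n k : ℕ}
    {T : H →L[ℂ] H} (hT : IsQuasiStarParanormal n k T) {c : ℂ} (hc : c ≠ 0) {x : H}
    (hx : T x = c • x) : ‖adjoint T x‖ ≤ ‖c‖ * ‖x‖ := by
  have hpow := pow_apply_of_apply_eq_smul hx
  have h := hT x
  simp only [hpow, map_smul, norm_smul, norm_pow] at h
  have hfactor : 0 < ‖c‖ ^ (k * (n + 1)) := pow_pos (norm_pos_iff.mpr hc) _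
  have hpow_le : ‖adjoint T x‖ ^ (n + 1) ≤ (‖c‖ * ‖x‖) ^ (n + 1) := by
    refine le_of_mul_le_mul_left ?_ hfactor
    calc ‖c‖ ^ (k * (n + 1)) * ‖adjoint T x‖ ^ (n + 1)
        = (‖c‖ ^ k * ‖adjoint T x‖) ^ (n + 1) := by ring
      _ ≤ ‖c‖ ^ k * (‖c‖ ^ (n + 1) * ‖x‖) * (‖c‖ ^ k * ‖x‖) ^ n := h
      _ = ‖c‖ ^ (k * (n + 1)) * (‖c‖ * ‖x‖) ^ (n + 1) := by ring
  exact (pow_le_pow_iff_left₀ (norm_nonneg _) (by positivity) n.succ_ne_zero).mp hpow_le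

end

/-- If `T` is `(n,k)`-quasi-*-paranormal, `λ ≠ 0` and `T x = λ x`, then `T* x = conj λ • x`;
consequently `ker (T - λ) ⊆ ker (T* - conj λ)`. -/
theorem stmt_12 {H : Type*} [NormedAddCommGroup H] [InnerProductSpace ℂ H] [CompleteSpace H]
    (T : H →L[ℂ] H) (n k : ℕ)
    (hT : ∀ x : H, ‖adjoint T (T ^ k <| x)‖ ^ (n + 1) ≤
      ‖T ^ (n + 1) <| T ^ k <| x‖ * ‖T ^ k <| x‖ ^ n)
    (lam : ℂ) (hlam : lam ≠ 0) :
    (∀ x : H, T x = lam • x → adjoint T x = (starRingEnd ℂ lam) • x) ∧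
      LinearMap.ker (↑(T - lam • (1 : H →L[ℂ] H)) : H →ₗ[ℂ] H) ≤
        LinearMap.ker (↑(adjoint T - (starRingEnd ℂ lam) • (1 : H →L[ℂ] H)) : H →ₗ[ℂ] H) := by
  have hQ : IsQuasiStarParanormal n k T := hT
  have hEigen : ∀ x : H, T x = lam • x → adjoint T x = starRingEnd ℂ lam • x := fun x hx =>
    adjoint_apply_eq_conj_smul_of_norm_le hx (hQ.norm_adjoint_apply_le hlam hx)
  refine ⟨hEigen, fun x hx => ?_⟩
  simp only [LinearMap.mem_ker, coe_coe, sub_apply, smul_apply, sub_eq_zero] at hx ⊢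
  exact hEigen x hx
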